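/- For all n ≥ 0, p_n(α_{n+1}) = α_{n+1}^{(n+1)/2}, where α_{n+1} = 4cos²(π/(n+3)). -/

import Mathlib

/-! With `x = 4 cos² θ` the recursion for `p` is solved by
`p m x · sin θ = (2 cos θ)^(m+1) · sin((m+2)θ)`, because `sin((k+1)θ) + sin((k-1)θ) = 2 cos θ sin(kθ)`.
For `θ = π/(n+3)` we have `sin((n+2)θ) = sin θ ≠ 0`, so `p n x = (2 cos θ)^(n+1) = x^((n+1)/2)`. -/

open Real Finset

noncomputable def p : ℕ → ℝ → ℝ
  | 0, x => x
  | 1, x => x * (x - 1)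
  | (n+2), x => x * (p (n+1) x - p n x)

lemma sin_add_two_mul (a θ : ℝ) :
    sin (a + 2 * θ) = 2 * cos θ * sin (a + θ) - sin a := by
  have hadd := sin_add (a + θ) θ
  have hsub := sin_sub (a + θ) θ
  rw [add_assoc, ← two_mul] at hadd
  rw [add_sub_cancel_right] at hsub
  linear_combination hadd + hsub

lemma p_four_mul_cos_sq_mul_sin (θ : ℝ) (m : ℕ) :
    p m (4 * cos θ ^ 2) * sin θ = (2 * cos θ) ^ (m + 1) * sin ((m + 2) * θ) := by
  induction m using Nat.twoStepInduction with
  | zero =>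
    norm_num [p, sin_two_mul]
    ring
  | one =>
    have h := sin_add_two_mul θ θ
    rw [show θ + θ = 2 * θ by ring, sin_two_mul] at h
    rw [p, Nat.cast_one, show ((1 : ℝ) + 2) * θ = θ + 2 * θ by ring, h]
    ring
  | more m ih₀ ih₁ =>
    have h := sin_add_two_mul ((m + 2) * θ) θ
    push_cast at ih₁ ⊢
    rw [show ((m : ℝ) + 1 + 2) * θ = (m + 2) * θ + θ by ring] at ih₁
    rw [show ((m : ℝ) + 2 + 2) * θ = (m + 2) * θ + 2 * θ by ring, h, p]
    linear_combination 4 * cos θ ^ 2 * ih₁ - 4 * cos θ ^ 2 * ih₀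

lemma p_four_mul_cos_sq_pi_div (n : ℕ) :
    p n (4 * cos (π / (n + 3)) ^ 2) = (2 * cos (π / (n + 3))) ^ (n + 1) := by
  set θ := π / (n + 3) with hθ
  have hθ_pos : 0 < θ := by positivity
  have hθ_lt : θ < π := div_lt_self pi_pos (by linarith [n.cast_nonneg (α := ℝ)])
  have hsin : sin θ ≠ 0 := (sin_pos_of_pos_of_lt_pi hθ_pos hθ_lt).ne'
  have hangle : (n + 2) * θ = π - θ := by
    rw [hθ]
    field_simp
    ring
  have h := p_four_mul_cos_sq_mul_sin θ n
  rw [hangle, sin_pi_sub] at h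
  exact mul_right_cancel₀ hsin h

lemma sq_rpow_natCast_div_two {a : ℝ} (ha : 0 ≤ a) (k : ℕ) :
    (a ^ 2) ^ ((k : ℝ) / 2) = a ^ k := by
  rw [← rpow_natCast a 2, ← rpow_mul ha, Nat.cast_ofNat,
    mul_div_cancel₀ _ two_ne_zero, rpow_natCast]

theorem stmt_5 (n : ℕ) :
    p n (4 * Real.cos (Real.pi / ((n : ℝ) + 3)) ^ 2) =
      (4 * Real.cos (Real.pi / ((n : ℝ) + 3)) ^ 2) ^ (((n : ℝ) + 1) / 2) := by
  have hcos : 0 ≤ 2 * cos (π / (n + 3)) := by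
    refine mul_nonneg zero_le_two (cos_nonneg_of_mem_Icc ⟨?_, ?_⟩)
    · linarith [show 0 < π / (n + 3) by positivity, pi_pos]
    · exact div_le_div_of_nonneg_left pi_pos.le two_pos (by linarith [n.cast_nonneg (α := ℝ)])
  have hsq : 4 * cos (π / (n + 3)) ^ 2 = (2 * cos (π / (n + 3))) ^ 2 := by ring
  rw [p_four_mul_cos_sq_pi_div, hsq, ← Nat.cast_add_one, sq_rpow_natCast_div_two hcos]
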